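/- arXiv:0811.1342 — 4 statements merged into one kernel-verified Lean document; each statement's English description precedes it below -/
import Mathlib

section
/- For all real x, y with x ≠ 0, |sin(x+iy)/(x+iy)| ≥ |sin x / x|; equivalently, Θ(x+iy) ≥ Θ(x) where Θ(z) = log|sin z / z|. -/
/-!
Since |sin (x + iy)|² = sin² x + sinh² y and |x + iy|² = x² + y², the claim
sin² x / x² ≤ (sin² x + sinh² y) / (x² + y²) is a mediant inequality, which reduces to
sin² x · y² ≤ x² · sinh² y, i.e. to |sin x| ≤ |x| and |y| ≤ |sinh y|.
-/

open Complex

theorem div_le_add_div_add {α : Type*} [Field α] [LinearOrder α] [IsStrictOrderedRing α]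
    {a b c d : α} (hb : 0 < b) (hd : 0 ≤ d) (h : a * d ≤ b * c) :
    a / b ≤ (a + c) / (b + d) := by
  rw [div_le_div_iff₀ hb (add_pos_of_pos_of_nonneg hb hd)]
  linear_combination h

theorem Real.abs_le_abs_sinh (y : ℝ) : |y| ≤ |Real.sinh y| := by
  rw [Real.abs_sinh]
  exact Real.self_le_sinh_iff.2 (abs_nonneg y)

theorem Complex.sq_norm_sin_add_mul_I (x y : ℝ) :
    ‖sin (x + y * I)‖ ^ 2 = Real.sin x ^ 2 + Real.sinh y ^ 2 := by
  rw [sin_add_mul_I, ← ofReal_sin, ← ofReal_cos, ← ofReal_cosh, ← ofReal_sinh, ← ofReal_mul,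
    ← ofReal_mul, Complex.sq_norm, normSq_add_mul_I]
  linear_combination Real.sin x ^ 2 * Real.cosh_sq y + Real.sinh y ^ 2 * Real.sin_sq_add_cos_sq x

theorem stmt_3 (x y : ℝ) (hx : x ≠ 0) :
    ‖Complex.sin ((x : ℂ) + (y : ℂ) * Complex.I) /
        ((x : ℂ) + (y : ℂ) * Complex.I)‖ ≥ |Real.sin x / x| := by
  rw [ge_iff_le, ← sq_le_sq₀ (abs_nonneg _) (norm_nonneg _), sq_abs, div_pow, norm_div, div_pow,
    sq_norm_sin_add_mul_I, Complex.sq_norm, normSq_add_mul_I]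
  have hcross : Real.sin x ^ 2 * y ^ 2 ≤ x ^ 2 * Real.sinh y ^ 2 :=
    mul_le_mul Real.sin_sq_le_sq (sq_le_sq.2 (Real.abs_le_abs_sinh y)) (sq_nonneg y) (sq_nonneg x)
  exact div_le_add_div_add (by positivity) (sq_nonneg y) hcross
end

section
/- For all real x, y with |x| ≤ 3π/4, log|sin(x+iy)/(x+iy)| ≤ log|sin x / x| + |y|. -/
/-! Since `‖sin (x + y * I)‖ ^ 2 = sin x ^ 2 + sinh y ^ 2` and `sin x = sinc x * x`, the claim
amounts to `sinh t ^ 2 ≤ sin x ^ 2 * (exp t ^ 2 - 1) + sinc x ^ 2 * (t * exp t) ^ 2` for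
`t = |y|`. Both `(exp t ^ 2 - 1) / 4` and `(t * exp t) ^ 2` dominate `sinh t ^ 2`, so this
holds as soon as the weights satisfy `4 * sin x ^ 2 + sinc x ^ 2 ≥ 1`. That is true for
`|x| ≤ 3π/4`: for `|x| ≤ π/2` by `sin x ≥ x - x ^ 3 / 6`, and beyond since `sin x ≥ 1/2`. -/

open Complex

namespace Real

lemma sin_eq_sinc_mul (x : ℝ) : sin x = sinc x * x := by
  rcases eq_or_ne x 0 with rfl | hx
  · simp
  · rw [sinc_of_ne_zero hx, div_mul_cancel₀ _ hx]

lemma sinc_ne_zero_of_abs_lt_pi {x : ℝ} (hx : |x| < π) : sinc x ≠ 0 := by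
  rcases eq_or_ne x 0 with rfl | hx0
  · simp
  rw [sinc_of_ne_zero hx0, div_ne_zero_iff, Ne,
    sin_eq_zero_iff_of_lt_of_lt (neg_lt_of_abs_lt hx) (lt_of_abs_lt hx)]
  exact ⟨hx0, hx0⟩

lemma sinh_sq_le_exp_sq_sub_one_div_four {t : ℝ} (ht : 0 ≤ t) :
    sinh t ^ 2 ≤ (exp t ^ 2 - 1) / 4 := by
  have hinv : exp t * exp (-t) = 1 := by rw [← exp_add, add_neg_cancel, exp_zero]
  have hle : exp (-t) ≤ 1 := exp_le_one_iff.mpr (neg_nonpos.mpr ht)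
  rw [sinh_eq]
  nlinarith [exp_pos (-t)]

lemma sinh_le_mul_exp (t : ℝ) : sinh t ≤ t * exp t := by
  have hinv : exp t * exp (-t) = 1 := by rw [← exp_add, add_neg_cancel, exp_zero]
  have hsq : 1 - 2 * t ≤ exp (-t) ^ 2 := by
    have := add_one_le_exp (-t + -t)
    rw [exp_add] at this
    nlinarith
  have hfactor : exp t - exp (-t) = exp t * (1 - exp (-t) ^ 2) := by
    linear_combination exp (-t) * hinv
  rw [sinh_eq, hfactor]
  nlinarith [mul_le_mul_of_nonneg_left hsq (exp_pos t).le]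

lemma sinh_sq_le_of_one_le_add {t p q : ℝ} (ht : 0 ≤ t) (hp : 0 ≤ p) (hq : 0 ≤ q)
    (hpq : 1 ≤ p + q) : sinh t ^ 2 ≤ p * ((exp t ^ 2 - 1) / 4) + q * (t * exp t) ^ 2 := by
  have hA := sinh_sq_le_exp_sq_sub_one_div_four ht
  have hB : sinh t ^ 2 ≤ (t * exp t) ^ 2 :=
    pow_le_pow_left₀ (sinh_nonneg_iff.mpr ht) (sinh_le_mul_exp t) 2
  nlinarith [mul_le_mul_of_nonneg_left hA hp, mul_le_mul_of_nonneg_left hB hq, sq_nonneg (sinh t)]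

lemma one_le_four_mul_sin_sq_add_sinc_sq {x : ℝ} (hx : |x| ≤ 3 * π / 4) :
    1 ≤ 4 * sin x ^ 2 + sinc x ^ 2 := by
  wlog hx0 : 0 ≤ x generalizing x
  · simpa [sin_neg] using this (x := -x) (by rwa [abs_neg]) (by linarith)
  rw [abs_of_nonneg hx0] at hx
  rcases le_total x (π / 2) with hsmall | hlarge
  · have hx2 : x ^ 2 ≤ 11 / 4 := by nlinarith [pi_lt_d2, pi_pos]
    have hsinc : 1 - x ^ 2 / 6 ≤ sinc x := by
      rcases hx0.eq_or_lt with rfl | hpos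
      · simp
      have := sin_ge_sub_cube hx0
      rw [sin_eq_sinc_mul] at this
      nlinarith
    have hsinc_sq : (1 - x ^ 2 / 6) ^ 2 ≤ sinc x ^ 2 := pow_le_pow_left₀ (by nlinarith) hsinc 2
    rw [sin_eq_sinc_mul]
    nlinarith
  · have hsin : 1 / 2 ≤ sin x := by
      calc (1 : ℝ) / 2 = 2 / π * (π / 4) := by field_simp; ring
        _ ≤ 2 / π * (π - x) := by gcongr; linarith
        _ ≤ sin (π - x) := mul_le_sin (by linarith) (by linarith)
        _ = sin x := sin_pi_sub x
    nlinarith [sq_nonneg (sinc x)]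

lemma sin_sq_add_sinh_sq_le {x : ℝ} (hx : |x| ≤ 3 * π / 4) (y : ℝ) :
    sin x ^ 2 + sinh y ^ 2 ≤ sinc x ^ 2 * (x ^ 2 + y ^ 2) * exp |y| ^ 2 := by
  have key := sinh_sq_le_of_one_le_add (abs_nonneg y) (by positivity) (sq_nonneg (sinc x))
    (one_le_four_mul_sin_sq_add_sinc_sq hx)
  rw [sinh_sq, ← cosh_abs, ← sinh_sq, ← sq_abs y]
  rw [sin_eq_sinc_mul] at key ⊢
  nlinarith

end Real

namespace Complex

lemma norm_sin_add_mul_I_sq (x y : ℝ) :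
    ‖sin (x + y * I)‖ ^ 2 = Real.sin x ^ 2 + Real.sinh y ^ 2 := by
  rw [sin_add_mul_I, ← ofReal_sin, ← ofReal_cos, ← ofReal_sinh, ← ofReal_cosh, Complex.sq_norm,
    ← ofReal_mul, ← ofReal_mul, normSq_add_mul_I]
  nlinarith [Real.sin_sq_add_cos_sq x, Real.cosh_sq y]

lemma sin_add_mul_I_ne_zero {x y : ℝ} (hx : |x| < Real.pi) (hz : (x : ℂ) + y * I ≠ 0) :
    sin (x + y * I) ≠ 0 := by
  intro h
  have h0 := norm_sin_add_mul_I_sq x y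
  rw [h, norm_zero, eq_comm, zero_pow two_ne_zero,
    add_eq_zero_iff_of_nonneg (sq_nonneg _) (sq_nonneg _),
    sq_eq_zero_iff, sq_eq_zero_iff, Real.sinh_eq_zero,
    Real.sin_eq_zero_iff_of_lt_of_lt (neg_lt_of_abs_lt hx) (lt_of_abs_lt hx)] at h0
  simp [h0] at hz

lemma norm_sin_add_mul_I_le {x : ℝ} (hx : |x| ≤ 3 * Real.pi / 4) (y : ℝ) :
    ‖sin (x + y * I)‖ ≤ |Real.sinc x| * ‖(x : ℂ) + y * I‖ * Real.exp |y| := by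
  refine le_of_sq_le_sq ?_ (by positivity)
  rw [mul_pow, mul_pow, sq_abs, norm_sin_add_mul_I_sq, Complex.sq_norm, normSq_add_mul_I]
  exact Real.sin_sq_add_sinh_sq_le hx y

end Complex

theorem stmt_4 (x y : ℝ) (hx : |x| ≤ 3 * Real.pi / 4) :
    Real.log (‖
        (if (x : ℂ) + (y : ℂ) * Complex.I = 0 then 1
         else Complex.sin ((x : ℂ) + (y : ℂ) * Complex.I) /
           ((x : ℂ) + (y : ℂ) * Complex.I))‖) ≤
      Real.log |if x = 0 then 1 else Real.sin x / x| + |y| := by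
  rw [← Real.sinc_apply]
  set z : ℂ := x + y * I
  by_cases hz : z = 0
  · obtain ⟨rfl, rfl⟩ : x = 0 ∧ y = 0 := by simpa [z, Complex.ext_iff] using hz
    simp [hz]
  have hx_lt : |x| < Real.pi := by linarith [Real.pi_pos]
  have hsinc := Real.sinc_ne_zero_of_abs_lt_pi hx_lt
  have hsin := sin_add_mul_I_ne_zero hx_lt hz
  rw [if_neg hz, norm_div]
  calc Real.log (‖Complex.sin z‖ / ‖z‖) ≤ Real.log (|Real.sinc x| * Real.exp |y|) := by
        refine Real.log_le_log (by positivity) ?_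
        rw [div_le_iff₀ (norm_pos_iff.mpr hz), mul_right_comm]
        exact norm_sin_add_mul_I_le hx y
    _ = Real.log |Real.sinc x| + |y| := by
        rw [Real.log_mul (abs_ne_zero.mpr hsinc) (Real.exp_pos _).ne', Real.log_exp]
end

section
/- For all real x and y: cos(2x)·(1 − e^{−2|y|})/2 − (1 − e^{−4|y|})/4 ≤ (sin²x / x²)·y², provided |x| ≤ 3π/4 (with sin²x/x² interpreted as 1 at x = 0). -/
/-!
Put `v = 1 - e^{-2|y|}`, so that `0 ≤ v ≤ 1` and `v ≤ 2|y|`. Since `cos 2x = 1 - 2 sin² x` and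
`e^{-4|y|} = (1 - v)²`, the left side is `v²/4 - v sin² x`, and the factor on the right is
`sinc² x`. As `v²/4 ≤ y²`, it suffices that `v²/4 - v sin² x ≤ sinc² x · v²/4`, which for
`0 ≤ v ≤ 1` follows from `1 ≤ sinc² x + 4 sin² x`, i.e. `x² ≤ sin² x (1 + 4x²)`. This holds for
`|x| ≤ 1` because `sin x ≥ x - x³/6` there, and for `1 ≤ |x| ≤ 3π/4` because `|sin x| ≥ 1/2`.
-/

open Real

namespace Real

lemma one_half_le_sin_of_mem_Icc {x : ℝ} (h₁ : π / 6 ≤ x) (h₂ : x ≤ 5 * π / 6) :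
    1 / 2 ≤ sin x := by
  have hdist : |x - π / 2| ≤ π / 3 := abs_le.mpr ⟨by linarith, by linarith⟩
  calc 1 / 2 = cos (π / 3) := cos_pi_div_three.symm
    _ ≤ cos |x - π / 2| :=
      cos_le_cos_of_nonneg_of_le_pi (abs_nonneg _) (by linarith [pi_pos]) hdist
    _ = sin x := by rw [cos_abs, cos_sub_pi_div_two]

lemma sq_le_sin_sq_mul_one_add_four_mul_sq {x : ℝ} (h₀ : 0 ≤ x) (hx : x ≤ 3 * π / 4) :
    x ^ 2 ≤ sin x ^ 2 * (1 + 4 * x ^ 2) := by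
  rcases le_total x 1 with hle | hge
  · have hcube := sin_ge_sub_cube h₀
    have hpos : 0 ≤ x - x ^ 3 / 6 := by nlinarith [mul_le_one₀ hle h₀ hle]
    have hsq : (x - x ^ 3 / 6) ^ 2 ≤ sin x ^ 2 := pow_le_pow_left₀ hpos hcube 2
    nlinarith [mul_le_mul_of_nonneg_right hsq (by positivity : (0 : ℝ) ≤ 1 + 4 * x ^ 2),
      pow_nonneg h₀ 4, pow_nonneg h₀ 6, mul_nonneg (pow_nonneg h₀ 4) (sub_nonneg.2 hle)]
  · have hsin : 1 / 2 ≤ sin x :=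
      one_half_le_sin_of_mem_Icc (by linarith [pi_le_four]) (by linarith [pi_pos])
    have hsq : 1 / 4 ≤ sin x ^ 2 := by nlinarith
    nlinarith [mul_le_mul_of_nonneg_right hsq (by positivity : (0 : ℝ) ≤ 1 + 4 * x ^ 2)]

lemma one_le_sinc_sq_add_four_mul_sin_sq {x : ℝ} (hx : |x| ≤ 3 * π / 4) :
    1 ≤ sinc x ^ 2 + 4 * sin x ^ 2 := by
  wlog h₀ : 0 ≤ x generalizing x
  · simpa [sinc_neg] using this (x := -x) (by rwa [abs_neg]) (by linarith)
  rcases h₀.eq_or_lt with rfl | hpos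
  · simp
  have hsq : 0 < x ^ 2 := by positivity
  rw [sinc_of_ne_zero hpos.ne', div_pow, div_add' _ _ _ hsq.ne', one_le_div hsq]
  linarith [sq_le_sin_sq_mul_one_add_four_mul_sq h₀ ((le_abs_self x).trans hx)]

end Real

lemma sq_div_four_sub_mul_le_mul_sq {s c v t : ℝ} (hs : 0 ≤ s) (hc : 0 ≤ c) (hsc : 1 ≤ c + 4 * s)
    (hv₀ : 0 ≤ v) (hv₁ : v ≤ 1) (hvt : v ≤ 2 * t) :
    v ^ 2 / 4 - s * v ≤ c * t ^ 2 := by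
  have hv : v ^ 2 ≤ 4 * t ^ 2 := by nlinarith
  calc v ^ 2 / 4 - s * v ≤ c * (v ^ 2 / 4) := by
        nlinarith [mul_nonneg hv₀ (mul_nonneg hs (sub_nonneg.2 hv₁)),
          mul_nonneg (sq_nonneg v) (sub_nonneg.2 hsc)]
    _ ≤ c * t ^ 2 := by gcongr; linarith

theorem stmt_5 (x y : ℝ) (hx : |x| ≤ 3 * Real.pi / 4) :
    Real.cos (2 * x) * (1 - Real.exp (-2 * |y|)) / 2 -
        (1 - Real.exp (-4 * |y|)) / 4 ≤
      (if x = 0 then 1 else Real.sin x ^ 2 / x ^ 2) * y ^ 2 := by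
  have hexp : exp (-4 * |y|) = exp (-2 * |y|) ^ 2 := by rw [← exp_nat_mul]; ring_nf
  have hlhs : cos (2 * x) * (1 - exp (-2 * |y|)) / 2 - (1 - exp (-4 * |y|)) / 4 =
      (1 - exp (-2 * |y|)) ^ 2 / 4 - sin x ^ 2 * (1 - exp (-2 * |y|)) := by
    rw [hexp, cos_two_mul, cos_sq']; ring
  have hsinc : (if x = 0 then 1 else sin x ^ 2 / x ^ 2) = sinc x ^ 2 := by
    rw [sinc_apply]; split_ifs <;> simp [div_pow]
  rw [hlhs, hsinc, ← sq_abs y]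
  refine sq_div_four_sub_mul_le_mul_sq (sq_nonneg _) (sq_nonneg _)
    (one_le_sinc_sq_add_four_mul_sin_sq hx) ?_ ?_ ?_
  · linarith [exp_le_one_iff.2 (by linarith [abs_nonneg y] : -2 * |y| ≤ 0)]
  · linarith [exp_pos (-2 * |y|)]
  · linarith [add_one_le_exp (-2 * |y|)]
end

section
/- Let J be a finite subset of a quasi-lattice closed under binary infima, and for γ ∈ J let k(γ) = |{γ' ∈ J : γ' ≥ γ}|. If γ, γ' ∈ J are distinct with k(γ') ≥ k(γ), then k(γ ∧ γ') > k(γ). -/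
/-! If `γ ≤ γ'` with `γ ≠ γ'`, then `γ` is in its own up-set but not in that of `γ'`, so
`k γ' < k γ`; hence `γ ≰ γ'`. Then `γ'` lies in the up-set of `γ ⊓ γ'` but not in that of `γ`,
which is contained in it, so `k γ < k (γ ⊓ γ')`. -/

theorem Set.ncard_sep_le_lt_of_not_le {α : Type*} [Preorder α] {J : Set α} (hJ : J.Finite)
    {a b c : α} (hab : a ≤ b) (hc : c ∈ J) (hac : a ≤ c) (hbc : ¬ b ≤ c) :
    {x ∈ J | b ≤ x}.ncard < {x ∈ J | a ≤ x}.ncard := by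
  have hsub : {x ∈ J | b ≤ x} ⊆ {x ∈ J | a ≤ x} := fun _ hx => ⟨hx.1, hab.trans hx.2⟩
  exact Set.ncard_lt_ncard ((Set.ssubset_iff_of_subset hsub).2 ⟨c, ⟨hc, hac⟩, fun h => hbc h.2⟩)
    (hJ.subset (Set.sep_subset _ _))

open Classical in
theorem stmt_15_general {Γ : Type*} [SemilatticeInf Γ]
    (J : Set Γ) (hJfin : J.Finite)
    (kk : Γ → ℕ) (hkk : ∀ γ, kk γ = {γ' ∈ J | γ ≤ γ'}.ncard)
    (γ γ' : Γ) (hγ : γ ∈ J) (hγ' : γ' ∈ J) (hne : γ ≠ γ')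
    (hle : kk γ ≤ kk γ') :
    kk γ < kk (γ ⊓ γ') := by
  have hnot : ¬ γ ≤ γ' := fun h => by
    have hlt := Set.ncard_sep_le_lt_of_not_le hJfin h hγ le_rfl fun h' => hne (h.antisymm h')
    rw [hkk, hkk] at hle
    omega
  rw [hkk, hkk]
  exact Set.ncard_sep_le_lt_of_not_le hJfin inf_le_left hγ' inf_le_right hnot

open Classical in
theorem stmt_15 {Γ : Type*} [SemilatticeInf Γ]
    (J : Set Γ) (hJfin : J.Finite) (hJ : ∀ a ∈ J, ∀ b ∈ J, a ⊓ b ∈ J)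
    (kk : Γ → ℕ) (hkk : ∀ γ, kk γ = {γ' ∈ J | γ ≤ γ'}.ncard)
    (γ γ' : Γ) (hγ : γ ∈ J) (hγ' : γ' ∈ J) (hne : γ ≠ γ')
    (hle : kk γ ≤ kk γ') :
    kk γ < kk (γ ⊓ γ') :=
  stmt_15_general J hJfin kk hkk γ γ' hγ hγ' hne hle
end
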